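/- For every integer n ≥ 2, the quantity A_n = n·k_n − (1/4)·Σ_{k=1}^{n} 1/sin(φ_k/2) is strictly negative. -/

import Mathlib

/-- `k_n = (1/(4n)) · Σ_{k=1}^{n-1} 1/sin(kπ/n)` -/
noncomputable def kn (n : ℕ) : ℝ :=
  (1 / (4 * n)) * ∑ k ∈ Finset.Icc 1 (n - 1), 1 / Real.sin (k * Real.pi / n)

/-- `φ_k = (2k-1)π/n` -/
noncomputable def phi (n k : ℕ) : ℝ := (2 * (k : ℝ) - 1) * Real.pi / n

/-!
Since `1 / sin` is convex on `(0, π)` and `kπ/n` is the midpoint of `φ_k/2` and `φ_{k+1}/2`,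
each term of `n·k_n` is at most the average of two consecutive terms of the second sum.
Summing over `k = 1, …, n - 1` telescopes to the whole second sum minus `(g 1 + g n)/2`,
where `g k = 1 / sin(φ_k/2) > 0`; this loss makes the inequality strict.
-/

open Real Finset

lemma two_div_add_le_inv_add_inv_div_two {x y : ℝ} (hx : 0 < x) (hy : 0 < y) :
    2 / (x + y) ≤ (1 / x + 1 / y) / 2 := by
  rw [div_le_div_iff₀ (by positivity) two_pos]
  field_simp
  nlinarith [sq_nonneg (x - y)]

lemma one_div_sin_midpoint_le {a b : ℝ} (ha : 0 < a) (hb : 0 < b) (ha' : a < π) (hb' : b < π) :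
    1 / sin ((a + b) / 2) ≤ (1 / sin a + 1 / sin b) / 2 := by
  have hsa : 0 < sin a := sin_pos_of_pos_of_lt_pi ha ha'
  have hsb : 0 < sin b := sin_pos_of_pos_of_lt_pi hb hb'
  have hcos_le : cos ((a - b) / 2) ≤ 1 := cos_le_one _
  have hsin_add : sin a + sin b = 2 * sin ((a + b) / 2) * cos ((a - b) / 2) := sin_add_sin a b
  have hsm : 0 < sin ((a + b) / 2) := sin_pos_of_pos_of_lt_pi (by linarith) (by linarith)
  calc 1 / sin ((a + b) / 2) ≤ 2 / (sin a + sin b) := by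
        rw [div_le_div_iff₀ hsm (by positivity)]
        nlinarith
    _ ≤ (1 / sin a + 1 / sin b) / 2 := two_div_add_le_inv_add_inv_div_two hsa hsb

lemma sum_Icc_avg_succ (g : ℕ → ℝ) (m : ℕ) :
    ∑ k ∈ Icc 1 m, (g k + g (k + 1)) / 2 = ∑ k ∈ Icc 1 (m + 1), g k - (g 1 + g (m + 1)) / 2 := by
  induction m with
  | zero => simp
  | succ m ih =>
    rw [sum_Icc_succ_top (by omega), ih, sum_Icc_succ_top (by omega : 1 ≤ m + 1 + 1)]
    ring

lemma phi_div_two_mem_Ioo {n k : ℕ} (hk : 1 ≤ k) (hkn : k ≤ n) : phi n k / 2 ∈ Set.Ioo 0 π := by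
  have hk' : (1 : ℝ) ≤ k := by exact_mod_cast hk
  have hkn' : (k : ℝ) ≤ n := by exact_mod_cast hkn
  have hn : (0 : ℝ) < n := by linarith
  unfold phi
  constructor
  · have : (0 : ℝ) < 2 * k - 1 := by linarith
    positivity
  · rw [div_div, div_lt_iff₀ (by positivity)]
    nlinarith [pi_pos]

lemma phi_midpoint (n k : ℕ) : (phi n k / 2 + phi n (k + 1) / 2) / 2 = k * π / n := by
  unfold phi
  push_cast
  ring

lemma natCast_mul_kn {n : ℕ} (hn : n ≠ 0) :
    (n : ℝ) * kn n = 1 / 4 * ∑ k ∈ Icc 1 (n - 1), 1 / sin (k * π / n) := by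
  unfold kn
  rw [← mul_assoc]
  congr 1
  field_simp

theorem An_neg (n : ℕ) (hn : 2 ≤ n) :
    (n : ℝ) * kn n - (1 / 4) * ∑ k ∈ Finset.Icc 1 n, 1 / Real.sin (phi n k / 2) < 0 := by
  set g : ℕ → ℝ := fun k => 1 / sin (phi n k / 2)
  have hg_pos : ∀ k, 1 ≤ k → k ≤ n → 0 < g k := fun k hk hkn =>
    one_div_pos.2 (sin_pos_of_pos_of_lt_pi (phi_div_two_mem_Ioo hk hkn).1
      (phi_div_two_mem_Ioo hk hkn).2)
  have hterm : ∀ k ∈ Icc 1 (n - 1), 1 / sin (k * π / n) ≤ (g k + g (k + 1)) / 2 := by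
    intro k hk
    obtain ⟨hk1, hkn⟩ := mem_Icc.1 hk
    obtain ⟨ha, ha'⟩ := phi_div_two_mem_Ioo (n := n) hk1 (by omega)
    obtain ⟨hb, hb'⟩ := phi_div_two_mem_Ioo (n := n) (k := k + 1) (by omega) (by omega)
    rw [← phi_midpoint]
    exact one_div_sin_midpoint_le ha hb ha' hb'
  have hsum : ∑ k ∈ Icc 1 (n - 1), 1 / sin (k * π / n) ≤
      ∑ k ∈ Icc 1 n, g k - (g 1 + g n) / 2 := by
    calc _ ≤ ∑ k ∈ Icc 1 (n - 1), (g k + g (k + 1)) / 2 := sum_le_sum hterm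
      _ = _ := by rw [sum_Icc_avg_succ, Nat.sub_add_cancel (by omega)]
  rw [natCast_mul_kn (by omega)]
  linarith [hg_pos 1 le_rfl (by omega), hg_pos n (by omega) le_rfl]
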